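/- Suppose f* ∈ F is the unique Pareto-optimal element of F (for minimizing p, i, e). Then W(f*) > W(g) for every g ∈ F with g ≠ f*. (This is the 'only if' direction of the paper's Lemma 7, made precise: when the Pareto-optimal set is a singleton, its element is the strict maximizer of the W-coefficient.) -/
import Mathlib


/-- The W-coefficient of a candidate architecture `f`, relative to the
maximum-point values `pT` (parameter size) and `iT` (inference speed). -/
noncomputable def Wcoef {α : Type*} (p i e : α → ℝ) (pT iT : ℝ) (f : α) : ℝ :=
  ((pT - p f) / pT) * ((iT - i f) / iT) * (1 / e f)

/-- `f` is Pareto-optimal in `F` for minimizing `p`, `i`, `e`: no `g ∈ F`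
weakly dominates `f` in all three objectives with at least one strict. -/
def ParetoOpt {α : Type*} (F : Finset α) (p i e : α → ℝ) (f : α) : Prop :=
  ¬ ∃ g ∈ F, (p g ≤ p f ∧ i g ≤ i f ∧ e g ≤ e f) ∧
    (p g < p f ∨ i g < i f ∨ e g < e f)

private lemma prod3_lt {a b c a' b' c' : ℝ} (ha : 0 < a) (hb : 0 < b) (hc : 0 < c)
    (h1 : a ≤ a') (h2 : b ≤ b') (h3 : c ≤ c')
    (hs : a < a' ∨ b < b' ∨ c < c') : a * b * c < a' * b' * c' := by
  have hbc : 0 < b * c := mul_pos hb hc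
  have hac : 0 < a * c := mul_pos ha hc
  have hab : 0 < a * b := mul_pos ha hb
  rcases hs with h | h | h
  · calc a * b * c = a * (b * c) := by ring
      _ < a' * (b * c) := mul_lt_mul_of_pos_right h hbc
      _ ≤ a' * (b' * c') :=
        mul_le_mul_of_nonneg_left (mul_le_mul h2 h3 hc.le (hb.trans_le h2).le)
          (ha.trans_le h1).le
      _ = a' * b' * c' := by ring
  · calc a * b * c = b * (a * c) := by ring
      _ < b' * (a * c) := mul_lt_mul_of_pos_right h hac
      _ ≤ b' * (a' * c') :=
        mul_le_mul_of_nonneg_left (mul_le_mul h1 h3 hc.le (ha.trans_le h1).le)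
          (hb.trans_le h2).le
      _ = a' * b' * c' := by ring
  · calc a * b * c = c * (a * b) := by ring
      _ < c' * (a * b) := mul_lt_mul_of_pos_right h hab
      _ ≤ c' * (a' * b') :=
        mul_le_mul_of_nonneg_left (mul_le_mul h1 h2 hb.le (ha.trans_le h1).le)
          (hc.trans_le h3).le
      _ = a' * b' * c' := by ring

/-- "Only if" direction of Lemma 7: if `fstar` is the unique Pareto-optimal
element of `F`, then it strictly maximizes the W-coefficient. -/
theorem stmt_1 {α : Type*} (F : Finset α) (hF : F.Nonempty)
    (p i e : α → ℝ) (pT iT : ℝ) (hpT : 0 < pT) (hiT : 0 < iT)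
    (hp : ∀ f ∈ F, p f < pT) (hi : ∀ f ∈ F, i f < iT) (he : ∀ f ∈ F, 0 < e f)
    (fstar : α) (hfstar : fstar ∈ F)
    (hpareto : ParetoOpt F p i e fstar)
    (huniq : ∀ g ∈ F, ParetoOpt F p i e g → g = fstar) :
    ∀ g ∈ F, g ≠ fstar → Wcoef p i e pT iT g < Wcoef p i e pT iT fstar := by
  -- key: domination gives strict W increase
  have key : ∀ g ∈ F, ¬ ParetoOpt F p i e g →
      ∃ h ∈ F, Wcoef p i e pT iT g < Wcoef p i e pT iT h := by
    intro g hg hng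
    rw [ParetoOpt, not_not] at hng
    obtain ⟨h, hh, ⟨h1, h2, h3⟩, hs⟩ := hng
    refine ⟨h, hh, ?_⟩
    unfold Wcoef
    apply prod3_lt
    · exact div_pos (by linarith [hp g hg]) hpT
    · exact div_pos (by linarith [hi g hg]) hiT
    · exact one_div_pos.mpr (he g hg)
    · exact (div_le_div_iff_of_pos_right hpT).mpr (by linarith)
    · exact (div_le_div_iff_of_pos_right hiT).mpr (by linarith)
    · exact one_div_le_one_div_of_le (he h hh) h3
    · rcases hs with h' | h' | h'
      · exact Or.inl ((div_lt_div_iff_of_pos_right hpT).mpr (by linarith))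
      · exact Or.inr (Or.inl ((div_lt_div_iff_of_pos_right hiT).mpr (by linarith)))
      · exact Or.inr (Or.inr (one_div_lt_one_div_of_lt (he h hh) h'))
  -- fstar maximizes W over F
  obtain ⟨m, hm, hmax⟩ := F.exists_max_image (Wcoef p i e pT iT) hF
  have hmpar : ParetoOpt F p i e m := by
    by_contra hnp
    obtain ⟨h, hh, hlt⟩ := key m hm hnp
    exact absurd (hmax h hh) (not_le.mpr hlt)
  have hmeq : m = fstar := huniq m hm hmpar
  intro g hg hne
  have hng : ¬ ParetoOpt F p i e g := fun hpg => hne (huniq g hg hpg)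
  obtain ⟨h, hh, hlt⟩ := key g hg hng
  calc Wcoef p i e pT iT g < Wcoef p i e pT iT h := hlt
    _ ≤ Wcoef p i e pT iT fstar := hmeq ▸ hmax h hh
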